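/- The class of recognizable tree languages is the smallest class of tree languages containing the finite tree languages and closed under union, tree concatenation and tree concatenation closure: (1) every finite tree language is recognizable, and the recognizable tree languages are closed under union, tree concatenation, and tree concatenation closure; (2) if C is any class of tree languages that contains every finite tree language and is closed under union, under the binary tree concatenations L_1 ·_a L_2 (for symbols a of rank 0), and under tree concatenation closure L^{*a}, then every recognizable tree language belongs to C. -/

import Mathlib

/-- Trees whose nodes carry labels from the universal symbol supply `ℕ`
(a node of rank `k` carries a symbol and `k` direct subtrees); a ranked
alphabet then singles out which symbols may be used at which rank. -/
inductive UTree : Type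
  | node (k : ℕ) (a : ℕ) (ts : Fin k → UTree) : UTree

def UTree.leaf (a : ℕ) : UTree := .node 0 a Fin.elim0

/-- `WF rk t`: every node of `t` of rank `k` is labeled by a symbol of `Σ_k = rk k`,
i.e. `t ∈ T_Σ` for the ranked alphabet `rk`. -/
inductive WF (rk : ℕ → Set ℕ) : UTree → Prop
  | node {k a : ℕ} {ts : Fin k → UTree} :
      a ∈ rk k → (∀ i, WF rk (ts i)) → WF rk (.node k a ts)

/-- A (total) deterministic bottom-up transition table together with final states. -/
structure DBUA (Q : Type) where
  δ : ℕ → ℕ → List Q → Q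
  F : Set Q

def DBUA.run {Q : Type} (M : DBUA Q) : UTree → Q
  | .node k a ts => M.δ k a (List.ofFn fun i => M.run (ts i))

/-- A tree language over the ranked alphabet `rk` is recognizable if it is the set
of well-formed trees accepted by some deterministic bottom-up finite tree
automaton with finitely many states. -/
def RecognizableU (rk : ℕ → Set ℕ) (L : Set UTree) : Prop :=
  ∃ (Q : Type) (_ : Fintype Q) (M : DBUA Q), L = {t | WF rk t ∧ M.run t ∈ M.F}

/-- A ranked alphabet: each `Σ_k` is finite and only finitely many are nonempty. -/
def IsRankedAlphabet (rk : ℕ → Set ℕ) : Prop :=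
  (⋃ k, rk k).Finite ∧ {k | (rk k).Nonempty}.Finite

/-- `SubstRel g t s`: `s` is obtained from `t` by replacing each rank-0 leaf
labeled `a` by some tree of `g a` (different occurrences may get different trees). -/
inductive SubstRel (g : ℕ → Set UTree) : UTree → UTree → Prop
  | leaf {a : ℕ} {s : UTree} : s ∈ g a → SubstRel g (.leaf a) s
  | node {k : ℕ} {a : ℕ} {ts ss : Fin (k + 1) → UTree} :
      (∀ i, SubstRel g (ts i) (ss i)) → SubstRel g (.node (k + 1) a ts) (.node (k + 1) a ss)

/-- The binary tree concatenation `L₁ ·_a L₂`. -/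
def concatAt (a : ℕ) (L₁ L₂ : Set UTree) : Set UTree :=
  {s | ∃ t ∈ L₁, SubstRel (fun b => {u | (b = a ∧ u ∈ L₂) ∨ (b ≠ a ∧ u = UTree.leaf b)}) t s}

/-- `X₀ = {a}`, `X_{n+1} = X_n ·_a (L ∪ {a})`. -/
def closIter (a : ℕ) (L : Set UTree) : ℕ → Set UTree
  | 0 => {UTree.leaf a}
  | n + 1 => concatAt a (closIter a L n) (L ∪ {UTree.leaf a})

/-- The tree concatenation closure `L^{*a} = ⋃_n X_n`. -/
def concatClosure (a : ℕ) (L : Set UTree) : Set UTree :=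
  ⋃ n, closIter a L n

/-!
Recognizability is phrased through compositional maps `φ : UTree → Q` into a finite type (the
value at a node depends only on its label and the values at its children); these are exactly the
runs of deterministic bottom-up automata. For `U ·_a V`, record at `s` the set of `U`-states of the
trees that substitute to `s`: it is computed from the children's sets and from whether `s ∈ V`.
The same works for `L^{*a}`, whose membership is read off from these sets thanks to
`L^{*a} = {a} ∪ (L \ {a}) ·_a L^{*a}`.

Conversely, given an automaton, attach to each state `q` a fresh nullary symbol `c q` (a hole) and
let `R(S, H, q)` be the trees with holes from `H` evaluating to `q` whose proper subtrees are holes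
or evaluate into `S` (Kleene's construction). For `p ∉ H`, cutting at the subtrees in state `p`
gives
  `R(S ∪ {p}, H, q) = R(S, H ∪ {p}, q) ·_{c p} R(S ∪ {p}, H, p)`,
  `R(S ∪ {p}, H, p) = R(S, H ∪ {p}, p)^{*c p} ·_{c p} R(S, H, p)`,
while `R(∅, H, q)` is finite. By induction on `S`, every `R(Q, ∅, q)` lies in the class, and the
language of the automaton is the finite union of those with `q` final.
-/

open Function Set

namespace UTree

theorem node_zero_eq_leaf (a : ℕ) (ts : Fin 0 → UTree) : node 0 a ts = leaf a := by
  rw [leaf, Subsingleton.elim ts Fin.elim0]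

theorem node_eq_leaf_iff {k a b : ℕ} {ts : Fin k → UTree} :
    node k a ts = leaf b ↔ k = 0 ∧ a = b := by
  refine ⟨fun h => ?_, fun ⟨hk, ha⟩ => ?_⟩
  · simp only [leaf, node.injEq] at h
    exact ⟨h.1, h.2.1⟩
  · subst hk ha
    exact node_zero_eq_leaf a ts

def subtrees : UTree → Set UTree
  | node k a ts => insert (node k a ts) (⋃ i, subtrees (ts i))

theorem mem_subtrees_self (t : UTree) : t ∈ t.subtrees := by
  cases t
  exact mem_insert _ _

theorem finite_subtrees (t : UTree) : t.subtrees.Finite := by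
  induction t with
  | node k a ts ih => exact (finite_iUnion ih).insert _

theorem subtrees_subset_of_mem {u t : UTree} (h : u ∈ t.subtrees) : u.subtrees ⊆ t.subtrees := by
  induction t with
  | node k a ts ih =>
    rcases h with rfl | h
    · exact subset_rfl
    · obtain ⟨i, hi⟩ := mem_iUnion.1 h
      exact (ih i hi).trans ((subset_iUnion (fun i => (ts i).subtrees) i).trans (subset_insert _ _))

theorem child_mem_subtrees {k a : ℕ} {ts : Fin k → UTree} {t : UTree}
    (h : node k a ts ∈ t.subtrees) (i : Fin k) : ts i ∈ t.subtrees :=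
  subtrees_subset_of_mem h (mem_insert_of_mem _ (mem_iUnion.2 ⟨i, mem_subtrees_self _⟩))

end UTree

theorem WF.node_iff {rk : ℕ → Set ℕ} {k a : ℕ} {ts : Fin k → UTree} :
    WF rk (.node k a ts) ↔ a ∈ rk k ∧ ∀ i, WF rk (ts i) :=
  ⟨fun h => by cases h with | node ha hts => exact ⟨ha, hts⟩, fun h => .node h.1 h.2⟩

theorem WF.leaf {rk : ℕ → Set ℕ} {a : ℕ} (ha : a ∈ rk 0) : WF rk (.leaf a) :=
  .node ha fun i => i.elim0

def Compositional {Q : Type*} (φ : UTree → Q) : Prop :=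
  ∀ (k a : ℕ) (ts ts' : Fin k → UTree),
    (∀ i, φ (ts i) = φ (ts' i)) → φ (.node k a ts) = φ (.node k a ts')

def IsRecognizable (L : Set UTree) : Prop :=
  ∃ (Q : Type) (_ : Finite Q) (φ : UTree → Q), Compositional φ ∧ ∃ F : Set Q, L = φ ⁻¹' F

theorem Compositional.prodMk {Q R : Type*} {φ : UTree → Q} {ψ : UTree → R}
    (hφ : Compositional φ) (hψ : Compositional ψ) : Compositional fun t => (φ t, ψ t) :=
  fun _ a _ _ h => Prod.ext (hφ _ a _ _ fun i => congrArg Prod.fst (h i))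
    (hψ _ a _ _ fun i => congrArg Prod.snd (h i))

theorem compositional_wf (rk : ℕ → Set ℕ) : Compositional fun t => WF rk t := by
  intro k a ts ts' h
  simp only [WF.node_iff, h]

theorem DBUA.compositional_run {Q : Type} (M : DBUA Q) : Compositional M.run := by
  intro k a ts ts' h
  simp only [DBUA.run, h]

open Classical in
noncomputable def DBUA.ofCompositional {Q : Type} (φ : UTree → Q) (F : Set Q) : DBUA Q where
  δ k a qs :=
    if h : ∃ ts : Fin k → UTree, qs = List.ofFn (φ ∘ ts) then φ (.node k a h.choose)
    else φ (.leaf a)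
  F := F

theorem DBUA.run_ofCompositional {Q : Type} {φ : UTree → Q} (hφ : Compositional φ) (F : Set Q) :
    (ofCompositional φ F).run = φ := by
  funext t
  induction t with
  | node k a ts ih =>
    have h : ∃ ts' : Fin k → UTree,
        List.ofFn (fun i => (ofCompositional φ F).run (ts i)) = List.ofFn (φ ∘ ts') :=
      ⟨ts, by simp only [ih, comp_def]⟩
    have hch : φ ∘ ts = φ ∘ h.choose :=
      List.ofFn_injective (by rw [← h.choose_spec]; simp only [ih, comp_def])
    rw [DBUA.run]
    exact (dif_pos h).trans (hφ _ a _ _ fun i => (congrFun hch i).symm)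

theorem recognizableU_iff {rk : ℕ → Set ℕ} {L : Set UTree} :
    RecognizableU rk L ↔ L ⊆ {t | WF rk t} ∧ IsRecognizable L := by
  constructor
  · rintro ⟨Q, _, M, rfl⟩
    exact ⟨fun t ht => ht.1, Prop × Q, inferInstance, fun t => (WF rk t, M.run t),
      (compositional_wf rk).prodMk M.compositional_run, {x | x.1 ∧ x.2 ∈ M.F}, rfl⟩
  · rintro ⟨hwf, Q, _, φ, hφ, F, rfl⟩
    refine ⟨Q, Fintype.ofFinite Q, .ofCompositional φ F, ?_⟩
    rw [DBUA.run_ofCompositional hφ]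
    ext t
    exact ⟨fun ht => ⟨hwf ht, ht⟩, fun ht => ht.2⟩

theorem IsRecognizable.union {U V : Set UTree} (hU : IsRecognizable U) (hV : IsRecognizable V) :
    IsRecognizable (U ∪ V) := by
  obtain ⟨Q, _, φ, hφ, F, rfl⟩ := hU
  obtain ⟨R, _, ψ, hψ, G, rfl⟩ := hV
  exact ⟨Q × R, inferInstance, _, hφ.prodMk hψ, {x | x.1 ∈ F ∨ x.2 ∈ G}, rfl⟩

open Classical in
noncomputable def optionOfMem {α : Type*} (T : Set α) (u : α) : Option T :=
  if h : u ∈ T then some ⟨u, h⟩ else none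

theorem eq_of_optionOfMem_eq {α : Type*} {T : Set α} {u v : α}
    (h : optionOfMem T u = optionOfMem T v) (hu : u ∈ T) : u = v := by
  by_cases hv : v ∈ T
  · simpa [optionOfMem, hu, hv] using h
  · simp [optionOfMem, hu, hv] at h

theorem isRecognizable_of_finite {L : Set UTree} (hL : L.Finite) : IsRecognizable L := by
  set T := ⋃ t ∈ L, t.subtrees
  have hT : T.Finite := hL.biUnion fun t _ => t.finite_subtrees
  have hLT : L ⊆ T := fun t ht => mem_biUnion ht t.mem_subtrees_self
  have hchild {k a : ℕ} {ts : Fin k → UTree} (h : .node k a ts ∈ T) (i : Fin k) : ts i ∈ T := by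
    obtain ⟨t, ht, hsub⟩ := mem_iUnion₂.1 h
    exact mem_biUnion ht (UTree.child_mem_subtrees hsub i)
  have hchildren {k a : ℕ} {ts ts' : Fin k → UTree}
      (h : ∀ i, optionOfMem T (ts i) = optionOfMem T (ts' i)) (hmem : .node k a ts ∈ T) :
      ts = ts' :=
    funext fun i => eq_of_optionOfMem_eq (h i) (hchild hmem i)
  have := hT.to_subtype
  refine ⟨Option T, inferInstance, optionOfMem T, fun _ a ts ts' h => ?_, optionOfMem T '' L, ?_⟩
  · by_cases h₁ : .node _ a ts ∈ T
    · rw [hchildren h h₁]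
    by_cases h₂ : .node _ a ts' ∈ T
    · rw [hchildren (fun i => (h i).symm) h₂]
    simp [optionOfMem, h₁, h₂]
  · refine (subset_preimage_image _ _).antisymm ?_
    rintro u ⟨t, ht, htu⟩
    rwa [← eq_of_optionOfMem_eq htu (hLT ht)]

section Substitution

def substAt (a : ℕ) (V : Set UTree) (b : ℕ) : Set UTree :=
  {u | (b = a ∧ u ∈ V) ∨ (b ≠ a ∧ u = UTree.leaf b)}

variable {a b k : ℕ} {U U' V V' W : Set UTree} {t s u : UTree}

theorem mem_concatAt : s ∈ concatAt a U V ↔ ∃ t ∈ U, SubstRel (substAt a V) t s := Iff.rfl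

theorem substAt_self : substAt a V a = V := by
  ext u
  simp [substAt]

theorem substAt_mono (h : V ⊆ V') (b : ℕ) : substAt a V b ⊆ substAt a V' b :=
  fun _ => Or.imp (And.imp_right (@h _)) id

theorem SubstRel.mono {g g' : ℕ → Set UTree} (hg : ∀ b, g b ⊆ g' b) (h : SubstRel g t s) :
    SubstRel g' t s := by
  induction h with
  | leaf h => exact .leaf (hg _ h)
  | node _ ih => exact .node ih

theorem substRel_leaf_iff {g : ℕ → Set UTree} : SubstRel g (.leaf b) s ↔ s ∈ g b :=
  ⟨fun h => by cases h with | leaf h => exact h, .leaf⟩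

theorem substRel_substAt_node {ts ss : Fin k → UTree} (hb : ¬(k = 0 ∧ b = a))
    (h : ∀ i, SubstRel (substAt a V) (ts i) (ss i)) :
    SubstRel (substAt a V) (.node k b ts) (.node k b ss) := by
  rcases k with _ | k
  · rw [UTree.node_zero_eq_leaf, UTree.node_zero_eq_leaf]
    exact .leaf (Or.inr ⟨fun h => hb ⟨rfl, h⟩, rfl⟩)
  · exact .node h

theorem substRel_substAt_refl (ha : UTree.leaf a ∈ V) (t : UTree) :
    SubstRel (substAt a V) t t := by
  induction t with
  | node k b ts ih =>
    by_cases hb : k = 0 ∧ b = a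
    · rw [UTree.node_eq_leaf_iff.2 hb]
      exact .leaf (Or.inl ⟨rfl, ha⟩)
    · exact substRel_substAt_node hb ih

theorem SubstRel.eq_of_substAt_leaf (h : SubstRel (substAt a {UTree.leaf a}) t s) : s = t := by
  induction h with
  | leaf h => rcases h with ⟨rfl, h⟩ | ⟨-, h⟩ <;> exact h
  | node _ ih => exact congrArg _ (funext ih)

theorem SubstRel.exists_of_substAt_node_left {ts : Fin k → UTree} (hb : ¬(k = 0 ∧ b = a))
    (h : SubstRel (substAt a V) (.node k b ts) s) :
    ∃ ss, s = .node k b ss ∧ ∀ i, SubstRel (substAt a V) (ts i) (ss i) := by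
  generalize ht : UTree.node k b ts = t at h
  cases h with
  | @leaf b' s hs =>
    obtain ⟨rfl, rfl⟩ := UTree.node_eq_leaf_iff.1 ht
    rcases hs with ⟨rfl, -⟩ | ⟨-, rfl⟩
    · exact absurd ⟨rfl, rfl⟩ hb
    · exact ⟨ts, (UTree.node_zero_eq_leaf _ ts).symm, fun i => i.elim0⟩
  | node hs =>
    cases ht
    exact ⟨_, rfl, hs⟩

theorem SubstRel.exists_of_substAt_node_right {ss : Fin k → UTree} (ht : t ≠ .leaf a)
    (h : SubstRel (substAt a V) t (.node k b ss)) :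
    ¬(k = 0 ∧ b = a) ∧ ∃ ts, t = .node k b ts ∧ ∀ i, SubstRel (substAt a V) (ts i) (ss i) := by
  generalize hs : UTree.node k b ss = s at h
  cases h with
  | @leaf b' s hs' =>
    rcases hs' with ⟨rfl, -⟩ | ⟨hb', rfl⟩
    · exact absurd rfl ht
    · obtain ⟨rfl, rfl⟩ := UTree.node_eq_leaf_iff.1 hs
      exact ⟨fun h => hb' h.2, ss, (UTree.node_zero_eq_leaf _ ss).symm, fun i => i.elim0⟩
  | node hts =>
    cases hs
    exact ⟨fun h => Nat.succ_ne_zero _ h.1, _, rfl, hts⟩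

theorem SubstRel.substAt_concatAt (h₁ : SubstRel (substAt a V) t u)
    (h₂ : SubstRel (substAt a W) u s) : SubstRel (substAt a (concatAt a V W)) t s := by
  induction h₁ generalizing s with
  | leaf h =>
    rcases h with ⟨rfl, hu⟩ | ⟨hb, rfl⟩
    · exact .leaf (Or.inl ⟨rfl, _, hu, h₂⟩)
    · rcases substRel_leaf_iff.1 h₂ with ⟨h, -⟩ | ⟨-, rfl⟩
      · exact absurd h hb
      · exact .leaf (Or.inr ⟨hb, rfl⟩)
  | node _ ih =>
    cases h₂ with
    | node h₂ => exact .node fun i => ih i (h₂ i)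

theorem SubstRel.exists_of_substAt_concatAt (h : SubstRel (substAt a (concatAt a V W)) t s) :
    ∃ u, SubstRel (substAt a V) t u ∧ SubstRel (substAt a W) u s := by
  induction h with
  | leaf h =>
    rcases h with ⟨rfl, u, hu, hus⟩ | ⟨hb, rfl⟩
    · exact ⟨u, .leaf (Or.inl ⟨rfl, hu⟩), hus⟩
    · exact ⟨_, .leaf (Or.inr ⟨hb, rfl⟩), .leaf (Or.inr ⟨hb, rfl⟩)⟩
  | node _ ih =>
    choose us h₁ h₂ using ih
    exact ⟨.node _ _ us, .node h₁, .node h₂⟩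

/-- A substitution uses only finitely many trees. -/
theorem SubstRel.exists_of_substAt_iUnion {D : ℕ → Set UTree} (hD : Monotone D)
    (h : SubstRel (substAt a (⋃ n, D n)) t s) : ∃ n, SubstRel (substAt a (D n)) t s := by
  induction h with
  | leaf h =>
    rcases h with ⟨rfl, hu⟩ | ⟨hb, rfl⟩
    · obtain ⟨n, hn⟩ := mem_iUnion.1 hu
      exact ⟨n, .leaf (Or.inl ⟨rfl, hn⟩)⟩
    · exact ⟨0, .leaf (Or.inr ⟨hb, rfl⟩)⟩
  | node _ ih =>
    choose n hn using ih
    exact ⟨Finset.univ.sup n, .node fun i =>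
      (hn i).mono (substAt_mono (hD (Finset.le_sup (Finset.mem_univ i))))⟩

theorem SubstRel.wf {rk : ℕ → Set ℕ} (hV : V ⊆ {t | WF rk t}) (ht : WF rk t)
    (h : SubstRel (substAt a V) t s) : WF rk s := by
  induction h with
  | leaf h =>
    rcases h with ⟨-, hu⟩ | ⟨-, rfl⟩
    · exact hV hu
    · exact ht
  | node _ ih =>
    obtain ⟨hb, hts⟩ := WF.node_iff.1 ht
    exact .node hb fun i => ih i (hts i)

theorem concatAt_assoc : concatAt a (concatAt a U V) W = concatAt a U (concatAt a V W) := by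
  ext s
  constructor
  · rintro ⟨u, ⟨t, ht, htu⟩, hus⟩
    exact ⟨t, ht, htu.substAt_concatAt hus⟩
  · rintro ⟨t, ht, hts⟩
    obtain ⟨u, htu, hus⟩ := hts.exists_of_substAt_concatAt
    exact ⟨u, ⟨t, ht, htu⟩, hus⟩

theorem concatAt_mono (hU : U ⊆ U') (hV : V ⊆ V') : concatAt a U V ⊆ concatAt a U' V' :=
  fun _ ⟨t, ht, hts⟩ => ⟨t, hU ht, hts.mono (substAt_mono hV)⟩

theorem concatAt_union_left : concatAt a (U ∪ U') V = concatAt a U V ∪ concatAt a U' V := by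
  ext s
  simp only [mem_concatAt, mem_union, or_and_right, exists_or]

theorem concatAt_iUnion_left {D : ℕ → Set UTree} :
    concatAt a (⋃ n, D n) V = ⋃ n, concatAt a (D n) V := by
  ext s
  simp only [mem_concatAt, mem_iUnion]
  exact ⟨fun ⟨t, ⟨n, ht⟩, hts⟩ => ⟨n, t, ht, hts⟩, fun ⟨n, t, ht, hts⟩ => ⟨t, ⟨n, ht⟩, hts⟩⟩

theorem concatAt_leaf_left : concatAt a {UTree.leaf a} V = V := by
  ext s
  simp only [mem_concatAt, mem_singleton_iff, exists_eq_left, substRel_leaf_iff, substAt_self]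

theorem concatAt_leaf_right : concatAt a U {UTree.leaf a} = U := by
  ext s
  exact ⟨fun ⟨t, ht, hts⟩ => hts.eq_of_substAt_leaf ▸ ht,
    fun hs => ⟨s, hs, substRel_substAt_refl (mem_singleton _) s⟩⟩

theorem concatAt_subset_wf {rk : ℕ → Set ℕ} (hU : U ⊆ {t | WF rk t}) (hV : V ⊆ {t | WF rk t}) :
    concatAt a U V ⊆ {t | WF rk t} :=
  fun _ ⟨_, ht, hts⟩ => hts.wf hV (hU ht)

end Substitution

section Closure

variable {a : ℕ} {L A Y : Set UTree}

theorem closIter_succ (n : ℕ) :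
    closIter a L (n + 1) = concatAt a (closIter a L n) (L ∪ {UTree.leaf a}) := rfl

theorem closIter_monotone : Monotone (closIter a L) :=
  monotone_nat_of_le_succ fun _ s hs => ⟨s, hs, substRel_substAt_refl (Or.inr rfl) s⟩

theorem closIter_subset_concatClosure (n : ℕ) : closIter a L n ⊆ concatClosure a L :=
  subset_iUnion (closIter a L) n

theorem leaf_mem_concatClosure : UTree.leaf a ∈ concatClosure a L :=
  closIter_subset_concatClosure 0 rfl

theorem concatAt_closIter_subset (n : ℕ) :
    concatAt a L (closIter a L n) ⊆ closIter a L (n + 1) := by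
  induction n with
  | zero =>
    rw [show closIter a L 0 = {UTree.leaf a} from rfl, concatAt_leaf_right, closIter_succ,
      show closIter a L 0 = {UTree.leaf a} from rfl, concatAt_leaf_left]
    exact subset_union_left
  | succ n ih =>
    rw [closIter_succ, ← concatAt_assoc]
    exact concatAt_mono ih subset_rfl

theorem concatAt_concatClosure_subset : concatAt a L (concatClosure a L) ⊆ concatClosure a L := by
  rintro s ⟨t, ht, hts⟩
  obtain ⟨n, hn⟩ := hts.exists_of_substAt_iUnion closIter_monotone
  exact closIter_subset_concatClosure (n + 1) (concatAt_closIter_subset n ⟨t, ht, hn⟩)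

theorem subset_concatClosure : L ⊆ concatClosure a L :=
  fun t ht => concatAt_concatClosure_subset ⟨t, ht, substRel_substAt_refl leaf_mem_concatClosure t⟩

theorem concatClosure_concatAt_subset (h : concatAt a A Y ⊆ Y) :
    concatAt a (concatClosure a A) Y ⊆ Y := by
  rw [concatClosure, concatAt_iUnion_left]
  refine iUnion_subset fun n => ?_
  induction n with
  | zero => exact concatAt_leaf_left.le
  | succ n ih =>
    rwa [closIter_succ, concatAt_assoc, concatAt_union_left, concatAt_leaf_left,
      union_eq_right.2 h]

/-- Removing `a` from `L` makes this equation decide membership bottom-up. -/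
theorem concatClosure_eq :
    concatClosure a L = {UTree.leaf a} ∪ concatAt a (L \ {UTree.leaf a}) (concatClosure a L) := by
  refine subset_antisymm (iUnion_subset fun n => ?_)
    (union_subset (singleton_subset_iff.2 leaf_mem_concatClosure)
      ((concatAt_mono sdiff_subset subset_rfl).trans concatAt_concatClosure_subset))
  have hL : L ∪ {UTree.leaf a} ⊆
      {UTree.leaf a} ∪ concatAt a (L \ {UTree.leaf a}) (concatClosure a L) := by
    rintro t (ht | rfl)
    · by_cases hta : t = UTree.leaf a
      · exact Or.inl hta
      · exact Or.inr ⟨t, ⟨ht, hta⟩, substRel_substAt_refl leaf_mem_concatClosure t⟩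
    · exact Or.inl rfl
  have hstep : concatAt a (concatClosure a L) (L ∪ {UTree.leaf a}) ⊆ concatClosure a L := by
    rw [concatClosure, concatAt_iUnion_left]
    exact iUnion_subset fun n => closIter_subset_concatClosure (n + 1)
  induction n with
  | zero => exact subset_union_left
  | succ n ih =>
    calc closIter a L (n + 1)
        ⊆ concatAt a ({UTree.leaf a} ∪ concatAt a (L \ {UTree.leaf a}) (concatClosure a L))
            (L ∪ {UTree.leaf a}) := concatAt_mono ih subset_rfl
      _ = (L ∪ {UTree.leaf a}) ∪ concatAt a (L \ {UTree.leaf a})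
            (concatAt a (concatClosure a L) (L ∪ {UTree.leaf a})) := by
          rw [concatAt_union_left, concatAt_leaf_left, concatAt_assoc]
      _ ⊆ _ := union_subset hL (subset_union_of_subset_right (concatAt_mono subset_rfl hstep) _)

theorem concatClosure_subset_wf {rk : ℕ → Set ℕ} (ha : a ∈ rk 0) (hL : L ⊆ {t | WF rk t}) :
    concatClosure a L ⊆ {t | WF rk t} := by
  refine iUnion_subset fun n => ?_
  have hleaf : {UTree.leaf a} ⊆ {t | WF rk t} := singleton_subset_iff.2 (WF.leaf ha)
  induction n with
  | zero => exact hleaf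
  | succ n ih => exact concatAt_subset_wf ih (union_subset hL hleaf)

end Closure

section PreStates

variable {Q : Type*} (φ : UTree → Q) (a : ℕ) (V : Set UTree)

def preStates (s : UTree) : Set Q :=
  φ '' {t | SubstRel (substAt a V) t s}

def properPreStates (s : UTree) : Set Q :=
  φ '' {t | t ≠ UTree.leaf a ∧ SubstRel (substAt a V) t s}

theorem preStates_eq (s : UTree) :
    preStates φ a V s = properPreStates φ a V s ∪ {q | s ∈ V ∧ q = φ (.leaf a)} := by
  ext q
  constructor
  · rintro ⟨t, hts, rfl⟩
    by_cases hta : t = UTree.leaf a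
    · subst hta
      have hs : s ∈ substAt a V a := substRel_leaf_iff.1 hts
      rw [substAt_self] at hs
      exact Or.inr ⟨hs, rfl⟩
    · exact Or.inl ⟨t, ⟨hta, hts⟩, rfl⟩
  · rintro (⟨t, ⟨-, hts⟩, rfl⟩ | ⟨hs, rfl⟩)
    · exact ⟨t, hts, rfl⟩
    · exact ⟨_, substRel_leaf_iff.2 (Or.inl ⟨rfl, hs⟩), rfl⟩

variable {φ a V}

theorem properPreStates_node_subset (hφ : Compositional φ) {k b : ℕ} {ss ss' : Fin k → UTree}
    (h : ∀ i, preStates φ a V (ss i) ⊆ preStates φ a V (ss' i)) :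
    properPreStates φ a V (.node k b ss) ⊆ properPreStates φ a V (.node k b ss') := by
  rintro _ ⟨t, ⟨hta, hts⟩, rfl⟩
  obtain ⟨hb, ts, rfl, hsub⟩ := hts.exists_of_substAt_node_right hta
  choose ts' hts' hφts using fun i => h i ⟨ts i, hsub i, rfl⟩
  exact ⟨.node k b ts', ⟨fun h => hb (UTree.node_eq_leaf_iff.1 h), substRel_substAt_node hb hts'⟩,
    hφ _ b _ _ hφts⟩

theorem properPreStates_node_congr (hφ : Compositional φ) {k b : ℕ} {ss ss' : Fin k → UTree}
    (h : ∀ i, preStates φ a V (ss i) = preStates φ a V (ss' i)) :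
    properPreStates φ a V (.node k b ss) = properPreStates φ a V (.node k b ss') :=
  (properPreStates_node_subset hφ fun i => (h i).le).antisymm
    (properPreStates_node_subset hφ fun i => (h i).ge)

end PreStates

theorem IsRecognizable.concatAt {a : ℕ} {U V : Set UTree} (hU : IsRecognizable U)
    (hV : IsRecognizable V) : IsRecognizable (concatAt a U V) := by
  obtain ⟨Q, _, φ, hφ, F, rfl⟩ := hU
  obtain ⟨R, _, ψ, hψ, G, rfl⟩ := hV
  refine ⟨Set Q × R, inferInstance, fun s => (preStates φ a (ψ ⁻¹' G) s, ψ s),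
    fun k b ss ss' h => ?_, {x | ∃ q ∈ x.1, q ∈ F}, ?_⟩
  · have hroot : ψ (.node k b ss) = ψ (.node k b ss') := hψ _ b _ _ fun i => congrArg Prod.snd (h i)
    dsimp only
    rw [preStates_eq, preStates_eq, properPreStates_node_congr hφ fun i => congrArg Prod.fst (h i),
      mem_preimage, mem_preimage, hroot]
  · ext s
    constructor
    · rintro ⟨t, ht, hts⟩
      exact ⟨φ t, ⟨t, hts, rfl⟩, ht⟩
    · rintro ⟨_, ⟨t, hts, rfl⟩, ht⟩
      exact ⟨t, ht, hts⟩

theorem mem_concatClosure_preimage_iff {Q : Type*} {φ : UTree → Q} {F : Set Q} {a : ℕ}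
    {s : UTree} : s ∈ concatClosure a (φ ⁻¹' F) ↔
      s = .leaf a ∨ ∃ q ∈ properPreStates φ a (concatClosure a (φ ⁻¹' F)) s, q ∈ F := by
  conv_lhs => rw [concatClosure_eq]
  constructor
  · rintro (hs | ⟨t, ⟨ht, hta⟩, hts⟩)
    · exact Or.inl hs
    · exact Or.inr ⟨φ t, ⟨t, ⟨hta, hts⟩, rfl⟩, ht⟩
  · rintro (hs | ⟨_, ⟨t, ⟨hta, hts⟩, rfl⟩, ht⟩)
    · exact Or.inl hs
    · exact Or.inr ⟨t, ⟨ht, hta⟩, hts⟩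

theorem IsRecognizable.concatClosure {a : ℕ} {L : Set UTree} (hL : IsRecognizable L) :
    IsRecognizable (concatClosure a L) := by
  obtain ⟨Q, _, φ, hφ, F, rfl⟩ := hL
  set C := _root_.concatClosure a (φ ⁻¹' F)
  refine ⟨Set Q × Prop, inferInstance, fun s => (properPreStates φ a C s, s ∈ C),
    fun k b ss ss' h => ?_, {x | x.2}, rfl⟩
  have hpre (i : Fin k) : preStates φ a C (ss i) = preStates φ a C (ss' i) := by
    obtain ⟨h₁, h₂⟩ := Prod.mk.inj (h i)
    rw [preStates_eq, preStates_eq, h₁, h₂]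
  have hproper := properPreStates_node_congr (b := b) hφ hpre
  refine Prod.ext hproper (propext ?_)
  dsimp only
  rw [mem_concatClosure_preimage_iff, mem_concatClosure_preimage_iff, UTree.node_eq_leaf_iff,
    UTree.node_eq_leaf_iff, hproper]

namespace RecognizableU

variable {rk : ℕ → Set ℕ}

theorem of_finite {L : Set UTree} (hL : L.Finite) (hwf : ∀ t ∈ L, WF rk t) : RecognizableU rk L :=
  recognizableU_iff.2 ⟨hwf, isRecognizable_of_finite hL⟩

theorem union {U V : Set UTree} (hU : RecognizableU rk U) (hV : RecognizableU rk V) :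
    RecognizableU rk (U ∪ V) :=
  let ⟨hU₁, hU₂⟩ := recognizableU_iff.1 hU
  let ⟨hV₁, hV₂⟩ := recognizableU_iff.1 hV
  recognizableU_iff.2 ⟨union_subset hU₁ hV₁, hU₂.union hV₂⟩

theorem concatAt {a : ℕ} {U V : Set UTree} (hU : RecognizableU rk U) (hV : RecognizableU rk V) :
    RecognizableU rk (concatAt a U V) :=
  let ⟨hU₁, hU₂⟩ := recognizableU_iff.1 hU
  let ⟨hV₁, hV₂⟩ := recognizableU_iff.1 hV
  recognizableU_iff.2 ⟨concatAt_subset_wf hU₁ hV₁, hU₂.concatAt hV₂⟩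

theorem concatClosure {a : ℕ} (ha : a ∈ rk 0) {L : Set UTree} (hL : RecognizableU rk L) :
    RecognizableU rk (concatClosure a L) :=
  let ⟨hL₁, hL₂⟩ := recognizableU_iff.1 hL
  recognizableU_iff.2 ⟨concatClosure_subset_wf ha hL₁, hL₂.concatClosure⟩

end RecognizableU

section Kleene

variable {Q : Type} (rk : ℕ → Set ℕ) (M : DBUA Q) (c : Q → ℕ)

/-- The leaf `c q` is a hole standing for the state `q`. `RunsThrough S H t q`: `t` is a tree
over `rk` and the holes of `H` on which `M` evaluates to `q` (a hole to its own state), every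
proper subtree of `t` being a hole or evaluating to a state of `S`. -/
inductive RunsThrough (S H : Set Q) : UTree → Q → Prop
  | hole {q : Q} : q ∈ H → RunsThrough S H (.leaf (c q)) q
  | node {k b : ℕ} {ts : Fin k → UTree} {qs : Fin k → Q} : b ∈ rk k →
      (∀ i, RunsThrough S H (ts i) (qs i)) → (∀ i, qs i ∈ S ∨ ts i = .leaf (c (qs i))) →
      RunsThrough S H (.node k b ts) (M.δ k b (List.ofFn qs))

def runLang (S H : Set Q) (q : Q) : Set UTree :=
  {t | RunsThrough rk M c S H t q}

variable {rk M c} {S H : Set Q} {p q : Q} {t : UTree}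

theorem RunsThrough.mono_left {S' : Set Q} (hS : S ⊆ S') (h : RunsThrough rk M c S H t q) :
    RunsThrough rk M c S' H t q := by
  induction h with
  | hole hq => exact .hole hq
  | node hb _ hqs ih => exact .node hb ih fun i => (hqs i).imp_left (@hS _)

theorem RunsThrough.mem_of_eq_leaf (hc : ∀ q, c q ∉ rk 0) (h : RunsThrough rk M c S H t q)
    (ht : t = .leaf (c q)) : q ∈ H := by
  cases h with
  | hole hq => exact hq
  | node hb =>
    obtain ⟨rfl, hb'⟩ := UTree.node_eq_leaf_iff.1 ht
    exact absurd (hb' ▸ hb) (hc _)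

theorem runsThrough_univ_empty_iff : RunsThrough rk M c univ ∅ t q ↔ WF rk t ∧ M.run t = q := by
  constructor
  · intro h
    induction h with
    | hole hq => exact absurd hq (notMem_empty _)
    | node hb _ _ ih =>
      refine ⟨.node hb fun i => (ih i).1, ?_⟩
      rw [DBUA.run]
      simp only [fun i => (ih i).2]
  · rintro ⟨ht, rfl⟩
    induction ht with
    | node hb _ ih => exact .node hb ih fun _ => Or.inl (mem_univ _)

theorem finite_runLang_empty [Finite Q] (hrk : IsRankedAlphabet rk) (H : Set Q) (q : Q) :
    (runLang rk M c ∅ H q).Finite := by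
  have hrk0 (k : ℕ) : (rk k).Finite := hrk.1.subset (subset_iUnion rk k)
  refine ((finite_singleton (UTree.leaf (c q))).union (hrk.2.biUnion fun k _ =>
    (hrk0 k).biUnion fun b _ => finite_range fun f : Fin k → Q =>
      UTree.node k b fun i => .leaf (c (f i)))).subset ?_
  rintro _ (_ | @⟨k, b, ts, qs, hb, -, hqs⟩)
  · exact Or.inl rfl
  · have hts : ts = fun i => .leaf (c (qs i)) := funext fun i => (hqs i).resolve_left id
    exact Or.inr (mem_biUnion (s := {k | (rk k).Nonempty}) ⟨b, hb⟩ (mem_biUnion hb ⟨qs, hts ▸ rfl⟩))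

theorem not_eq_hole (hc0 : ∀ q, c q ∉ rk 0) {k b : ℕ} (hb : b ∈ rk k) : ¬(k = 0 ∧ b = c p) := by
  rintro ⟨rfl, rfl⟩
  exact hc0 p hb

variable (hc : Injective c) (hc0 : ∀ q, c q ∉ rk 0)
include hc hc0

theorem concatAt_runLang_subset :
    concatAt (c p) (runLang rk M c S (insert p H) q) (runLang rk M c (insert p S) H p) ⊆
      runLang rk M c (insert p S) H q := by
  rintro t ⟨top, htop, hsub⟩
  induction htop generalizing t with
  | @hole q hq =>
    rcases substRel_leaf_iff.1 hsub with ⟨hcq, ht⟩ | ⟨hcq, rfl⟩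
    · rwa [hc hcq]
    · exact .hole ((mem_insert_iff.1 hq).resolve_left fun h => hcq (congrArg c h))
  | @node k b tops qs hb _ hqs ih =>
    obtain ⟨ts, rfl, hts⟩ := hsub.exists_of_substAt_node_left (not_eq_hole hc0 hb)
    refine .node hb (fun i => ih i (hts i)) fun i => ?_
    rcases hqs i with hq | hhole
    · exact Or.inl (mem_insert_of_mem p hq)
    · by_cases hqp : qs i = p
      · exact Or.inl (hqp ▸ mem_insert _ _)
      · have := hts i
        rw [hhole, substRel_leaf_iff] at this
        exact Or.inr (this.resolve_left fun h => hqp (hc h.1)).2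

/-- Cut `t` at its maximal proper subtrees in state `p`; each of them lies in `X`, by induction
and `hX`. -/
theorem mem_concatAt_runLang {X : Set UTree} (hp : p ∉ H)
    (hX : concatAt (c p) (runLang rk M c S (insert p H) p) X ⊆ X)
    (h : RunsThrough rk M c (insert p S) H t q) :
    t ∈ concatAt (c p) (runLang rk M c S (insert p H) q) X := by
  induction h with
  | @hole q hq =>
    have hqp : c q ≠ c p := fun h => hp (hc h ▸ hq)
    exact ⟨_, .hole (mem_insert_of_mem p hq), .leaf (Or.inr ⟨hqp, rfl⟩)⟩
  | @node k b ts qs hb hrun hqs ih =>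
    have hchild (i : Fin k) : ∃ top, RunsThrough rk M c S (insert p H) top (qs i) ∧
        (qs i ∈ S ∨ top = .leaf (c (qs i))) ∧ SubstRel (substAt (c p) X) top (ts i) := by
      by_cases hqp : qs i = p
      · refine ⟨_, .hole (hqp ▸ mem_insert _ _), Or.inr rfl, .leaf (Or.inl ⟨?_, hX ?_⟩)⟩
        · rw [hqp]
        · exact hqp ▸ ih i
      rcases hqs i with hq | hhole
      · obtain ⟨top, htop, hsub⟩ := ih i
        exact ⟨top, htop, Or.inl ((mem_insert_iff.1 hq).resolve_left hqp), hsub⟩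
      · have hH := (hrun i).mem_of_eq_leaf hc0 hhole
        refine ⟨ts i, hhole ▸ .hole (mem_insert_of_mem p hH), Or.inr hhole, ?_⟩
        rw [hhole]
        exact .leaf (Or.inr ⟨fun h => hqp (hc h), rfl⟩)
    choose tops htops hholes hsubs using hchild
    exact ⟨_, .node hb htops hholes, substRel_substAt_node (not_eq_hole hc0 hb) hsubs⟩

theorem runLang_insert_self (hp : p ∉ H) :
    runLang rk M c (insert p S) H p =
      concatAt (c p) (concatClosure (c p) (runLang rk M c S (insert p H) p))
        (runLang rk M c S H p) := by
  set A := runLang rk M c S (insert p H) p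
  have hX : concatAt (c p) A (concatAt (c p) (concatClosure (c p) A) (runLang rk M c S H p)) ⊆
      concatAt (c p) (concatClosure (c p) A) (runLang rk M c S H p) := by
    rw [← concatAt_assoc]
    exact concatAt_mono concatAt_concatClosure_subset subset_rfl
  refine subset_antisymm (fun t ht => hX (mem_concatAt_runLang hc hc0 hp hX ht)) ?_
  refine (concatAt_mono subset_rfl fun t ht => ht.mono_left (subset_insert p S)).trans ?_
  exact concatClosure_concatAt_subset (concatAt_runLang_subset hc hc0)

theorem runLang_insert (hp : p ∉ H) :
    runLang rk M c (insert p S) H q =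
      concatAt (c p) (runLang rk M c S (insert p H) q) (runLang rk M c (insert p S) H p) :=
  subset_antisymm
    (fun _ ht => mem_concatAt_runLang hc hc0 hp (concatAt_runLang_subset hc hc0) ht)
    (concatAt_runLang_subset hc hc0)

theorem runLang_mem [Finite Q] (hrk : IsRankedAlphabet rk) {C : Set (Set UTree)}
    (hfin : ∀ L : Set UTree, L.Finite → L ∈ C)
    (hconcat : ∀ (a : ℕ) (U V : Set UTree), U ∈ C → V ∈ C → concatAt a U V ∈ C)
    (hclos : ∀ (a : ℕ) (L : Set UTree), L ∈ C → concatClosure a L ∈ C)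
    (S H : Finset Q) (hSH : Disjoint S H) (q : Q) : runLang rk M c S H q ∈ C := by
  classical
  induction S using Finset.induction_on generalizing H q with
  | empty => simpa using hfin _ (finite_runLang_empty hrk (H : Set Q) q)
  | @insert p S hpS ih =>
    have hpH : p ∉ H := Finset.disjoint_left.1 hSH (Finset.mem_insert_self p S)
    have hS : Disjoint S H := hSH.mono_left (Finset.subset_insert p S)
    have hS' : Disjoint S (insert p H) := Finset.disjoint_insert_right.2 ⟨hpS, hS⟩
    have ih' (q : Q) : runLang rk M c S (insert p (H : Set Q)) q ∈ C := by
      simpa using ih (insert p H) hS' q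
    rw [Finset.coe_insert, runLang_insert hc hc0 hpH, runLang_insert_self hc hc0 hpH]
    exact hconcat _ _ _ (ih' q) (hconcat _ _ _ (hclos _ _ (ih' p)) (ih H hS p))

end Kleene

theorem exists_injective_not_mem (α : Type*) [Finite α] {s : Set ℕ} (hs : s.Finite) :
    ∃ c : α → ℕ, Injective c ∧ ∀ x, c x ∉ s := by
  obtain ⟨e, he⟩ := exists_injective_nat α
  obtain ⟨N, hN⟩ := hs.bddAbove
  refine ⟨fun x => N + 1 + e x, fun x y h => he (Nat.add_left_cancel h), fun x hx => ?_⟩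
  have : N + 1 + e x ≤ N := hN hx
  omega

theorem biUnion_mem_of_finite {α ι : Type*} {C : Set (Set α)} (hempty : ∅ ∈ C)
    (hunion : ∀ U V, U ∈ C → V ∈ C → U ∪ V ∈ C) {s : Set ι} (hs : s.Finite) {f : ι → Set α}
    (hf : ∀ i ∈ s, f i ∈ C) : ⋃ i ∈ s, f i ∈ C := by
  induction s, hs using Set.Finite.induction_on with
  | empty => simpa using hempty
  | @insert i s _ _ ih =>
    rw [biUnion_insert]
    exact hunion _ _ (hf i (mem_insert i s)) (ih fun j hj => hf j (mem_insert_of_mem i hj))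

theorem mem_of_recognizableU {C : Set (Set UTree)}
    (hfin : ∀ L : Set UTree, L.Finite → L ∈ C)
    (hunion : ∀ U V, U ∈ C → V ∈ C → U ∪ V ∈ C)
    (hconcat : ∀ (a : ℕ) (U V : Set UTree), U ∈ C → V ∈ C → concatAt a U V ∈ C)
    (hclos : ∀ (a : ℕ) (L : Set UTree), L ∈ C → concatClosure a L ∈ C)
    {rk : ℕ → Set ℕ} (hrk : IsRankedAlphabet rk) {L : Set UTree} (hL : RecognizableU rk L) :
    L ∈ C := by
  obtain ⟨Q, _, M, rfl⟩ := hL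
  obtain ⟨c, hc, hc0⟩ := exists_injective_not_mem Q (hrk.1.subset (subset_iUnion rk 0))
  have hL : {t | WF rk t ∧ M.run t ∈ M.F} = ⋃ q ∈ M.F, runLang rk M c univ ∅ q := by
    ext t
    simp [runLang, runsThrough_univ_empty_iff]
  rw [hL]
  refine biUnion_mem_of_finite (hfin ∅ finite_empty) hunion M.F.toFinite fun q _ => ?_
  simpa using runLang_mem hc hc0 hrk hfin hconcat hclos Finset.univ ∅
    (Finset.disjoint_empty_right _) q

/-- Theorem 3.43: the recognizable tree languages form the smallest class of tree
languages containing the finite tree languages and closed under union, tree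
concatenation and tree concatenation closure. -/
theorem recognizable_smallest_class :
    -- (1) RECOG contains the finite tree languages and has the closure properties
    (∀ rk, IsRankedAlphabet rk →
      ∀ L : Set UTree, L.Finite → (∀ t ∈ L, WF rk t) → RecognizableU rk L) ∧
    (∀ rk, IsRankedAlphabet rk →
      ∀ U V, RecognizableU rk U → RecognizableU rk V → RecognizableU rk (U ∪ V)) ∧
    (∀ rk, IsRankedAlphabet rk → ∀ a ∈ rk 0,
      ∀ U V, RecognizableU rk U → RecognizableU rk V → RecognizableU rk (concatAt a U V)) ∧
    (∀ rk, IsRankedAlphabet rk → ∀ a ∈ rk 0,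
      ∀ L, RecognizableU rk L → RecognizableU rk (concatClosure a L)) ∧
    -- (2) any class of tree languages with these properties contains RECOG
    (∀ C : Set (Set UTree),
      (∀ L : Set UTree, L.Finite → L ∈ C) →
      (∀ U V, U ∈ C → V ∈ C → U ∪ V ∈ C) →
      (∀ (a : ℕ) (U V : Set UTree), U ∈ C → V ∈ C → concatAt a U V ∈ C) →
      (∀ (a : ℕ) (L : Set UTree), L ∈ C → concatClosure a L ∈ C) →
      ∀ rk, IsRankedAlphabet rk → ∀ L, RecognizableU rk L → L ∈ C) :=
  ⟨fun _ _ _ => RecognizableU.of_finite,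
    fun _ _ _ _ => RecognizableU.union,
    fun _ _ _ _ _ _ => RecognizableU.concatAt,
    fun _ _ _ ha _ => RecognizableU.concatClosure ha,
    fun _ hfin hunion hconcat hclos _ hrk _ => mem_of_recognizableU hfin hunion hconcat hclos hrk⟩
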